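/- Let m ≥ 2 be an integer, let v : ℝ^m ∖ {0} → ℝ^{m³} be the cubic Misawa–Nakauchi map, and for β ∈ (0, π/2) define ṽ_β : ℝ^m ∖ {0} → ℝ^{m³+1} by ṽ_β(x) = (sin β · v(x), cos β), a map into the unit sphere 𝕊^{m³} ⊂ ℝ^{m³+1}. Then ṽ_β satisfies the biharmonic map equation Δ²ṽ_β + 2 div(|∇ṽ_β|² ∇ṽ_β) + (|Δṽ_β|² + Δ|∇ṽ_β|² + 2⟨∇ṽ_β, ∇Δṽ_β⟩ + 2|∇ṽ_β|⁴) ṽ_β = 0 at every point of ℝ^m ∖ {0} if and only if sin²β = (5/6)·(m−1)/(m+1). -/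

import Mathlib

noncomputable section

open Real MeasureTheory

/-- Partial derivative of `f` in the `a`-th coordinate direction. -/
def pd {m : ℕ} (a : Fin m) (f : EuclideanSpace ℝ (Fin m) → ℝ)
    (x : EuclideanSpace ℝ (Fin m)) : ℝ :=
  fderiv ℝ f x (EuclideanSpace.single a 1)

/-- Euclidean Laplacian `Δf = Σ_a ∂²f/∂x_a²`. -/
def lap {m : ℕ} (f : EuclideanSpace ℝ (Fin m) → ℝ)
    (x : EuclideanSpace ℝ (Fin m)) : ℝ :=
  ∑ a : Fin m, pd a (pd a f) x

/-- Squared norm of the total derivative: `|∇w|² = Σ_{k,a} (∂_k w_a)²`. -/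
def gradSq {m : ℕ} {ι : Type*} [Fintype ι]
    (w : ι → EuclideanSpace ℝ (Fin m) → ℝ) (x : EuclideanSpace ℝ (Fin m)) : ℝ :=
  ∑ k : Fin m, ∑ a : ι, (pd k (w a) x) ^ 2

/-- The cubic Misawa–Nakauchi map
`v_{ijk}(x) = (1/√((m−1)(m+2)))(δ_{ij}x_k/r + δ_{jk}x_i/r + δ_{ik}x_j/r − (m+2)xᵢxⱼx_k/r³)`. -/
def vMN (m : ℕ) (i j k : Fin m) (x : EuclideanSpace ℝ (Fin m)) : ℝ :=
  (1 / Real.sqrt (((m : ℝ) - 1) * ((m : ℝ) + 2))) *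
    ((if i = j then (1 : ℝ) else 0) * x k / ‖x‖
      + (if j = k then (1 : ℝ) else 0) * x i / ‖x‖
      + (if i = k then (1 : ℝ) else 0) * x j / ‖x‖
      - ((m : ℝ) + 2) * x i * x j * x k / ‖x‖ ^ 3)

/-- `w` satisfies the (extrinsic) biharmonic map equation for sphere-valued maps at `x`:
`Δ²w + 2 div(|∇w|²∇w) + (|Δw|² + Δ|∇w|² + 2⟨∇w,∇Δw⟩ + 2|∇w|⁴) w = 0`. -/
def IsBiharmonicAt {m : ℕ} {ι : Type*} [Fintype ι]
    (w : ι → EuclideanSpace ℝ (Fin m) → ℝ) (x : EuclideanSpace ℝ (Fin m)) : Prop :=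
  ∀ a : ι,
    lap (lap (w a)) x
      + 2 * ∑ k : Fin m, pd k (fun y => gradSq w y * pd k (w a) y) x
      + ((∑ b : ι, (lap (w b) x) ^ 2) + lap (gradSq w) x
          + 2 * ∑ k : Fin m, ∑ b : ι, pd k (w b) x * pd k (lap (w b)) x
          + 2 * (gradSq w x) ^ 2) * w a x = 0

/-- The rotated map `ṽ_β = (sin β · v, cos β)`, with values in `ℝ^{m³+1} = ℝ^{m³} × ℝ`. -/
def vTilde (m : ℕ) (β : ℝ) :
    (Fin m × Fin m × Fin m) ⊕ Unit → EuclideanSpace ℝ (Fin m) → ℝ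
  | Sum.inl p => fun x => Real.sin β * vMN m p.1 p.2.1 p.2.2 x
  | Sum.inr _ => fun _ => Real.cos β

/-!
The Misawa–Nakauchi map `v` is homogeneous of degree zero, takes values in the unit sphere and
satisfies `Δv = -μ v / |x|²` with `μ = 3(m+1)`. For any such map, differentiating `|v|² = 1` once
and twice gives `Σ_b v_b ∂_k v_b = 0` and `|∇v|² = μ / |x|²`, while Euler's identity `x · ∇v = 0`
kills every product of `∇v` with the gradient of a radial factor. Consequently every term of the
biharmonic equation for `ṽ_β = (sin β · v, cos β)` is a multiple of `|x|⁻⁴`: with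
`A = 2μ sin²β - μ + 8 - 2m`, the last component of the equation is `μ A sin²β cos β |x|⁻⁴` and
the others are `-μ A sin β cos²β |x|⁻⁴ v`. So for `0 < β < π/2` the map `ṽ_β` is biharmonic iff
`A = 0`, which for `μ = 3(m+1)` reads `sin²β = (5/6)(m-1)/(m+1)`.
-/

open Filter Topology

theorem ContDiffAt.eventually_differentiableAt {𝕜 E F : Type*} [NontriviallyNormedField 𝕜]
    [NormedAddCommGroup E] [NormedSpace 𝕜 E] [NormedAddCommGroup F] [NormedSpace 𝕜 F]
    {f : E → F} {x : E} (hf : ContDiffAt 𝕜 2 f x) : ∀ᶠ y in 𝓝 x, DifferentiableAt 𝕜 f y :=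
  (hf.eventually (by simp)).mono fun _ hy => hy.differentiableAt two_ne_zero

section Calculus

variable {m : ℕ} {f g : EuclideanSpace ℝ (Fin m) → ℝ} {x : EuclideanSpace ℝ (Fin m)}

theorem Filter.EventuallyEq.pd_eq (h : f =ᶠ[𝓝 x] g) (a : Fin m) : pd a f x = pd a g x := by
  simp only [pd, h.fderiv_eq]

theorem Filter.EventuallyEq.pd (h : f =ᶠ[𝓝 x] g) (a : Fin m) : pd a f =ᶠ[𝓝 x] pd a g :=
  h.fderiv.mono fun y hy => by simp only [_root_.pd]; rw [hy]

theorem Filter.EventuallyEq.lap_eq (h : f =ᶠ[𝓝 x] g) : lap f x = lap g x :=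
  Finset.sum_congr rfl fun a _ => (h.pd a).pd_eq a

theorem pd_const (a : Fin m) (c : ℝ) : pd a (fun _ => c) x = 0 := by
  simp [pd]

theorem pd_const_mul (a : Fin m) (c : ℝ) (f : EuclideanSpace ℝ (Fin m) → ℝ)
    (x : EuclideanSpace ℝ (Fin m)) :
    pd a (fun y => c * f y) x = c * pd a f x :=
  congr($(fderiv_const_smul_field (𝕜 := ℝ) (f := f) c) x (EuclideanSpace.single a 1))

theorem pd_add (a : Fin m) (hf : DifferentiableAt ℝ f x) (hg : DifferentiableAt ℝ g x) :
    pd a (fun y => f y + g y) x = pd a f x + pd a g x := by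
  simp [pd, fderiv_fun_add hf hg]

theorem pd_sub (a : Fin m) (hf : DifferentiableAt ℝ f x) (hg : DifferentiableAt ℝ g x) :
    pd a (fun y => f y - g y) x = pd a f x - pd a g x := by
  simp [pd, fderiv_fun_sub hf hg]

theorem pd_mul (a : Fin m) (hf : DifferentiableAt ℝ f x) (hg : DifferentiableAt ℝ g x) :
    pd a (fun y => f y * g y) x = pd a f x * g x + f x * pd a g x := by
  simp [pd, fderiv_fun_mul hf hg]
  ring

theorem pd_sum {ι : Type*} [Fintype ι] {f : ι → EuclideanSpace ℝ (Fin m) → ℝ} (a : Fin m)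
    (hf : ∀ i, DifferentiableAt ℝ (f i) x) :
    pd a (fun y => ∑ i, f i y) x = ∑ i, pd a (f i) x := by
  simp [pd, fderiv_fun_sum fun i _ => hf i]

theorem pd_coord (a i : Fin m) : pd a (fun y => y i) x = if i = a then 1 else 0 := by
  rw [pd, show (fun y : EuclideanSpace ℝ (Fin m) => y i) = EuclideanSpace.proj (𝕜 := ℝ) i from rfl,
    ContinuousLinearMap.fderiv]
  simp [PiLp.single_apply, eq_comm]

theorem ContDiffAt.differentiableAt_pd (hf : ContDiffAt ℝ 2 f x) (a : Fin m) :
    DifferentiableAt ℝ (pd a f) x :=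
  ((hf.fderiv_right (m := 1) le_rfl).differentiableAt one_ne_zero).clm_apply
    (differentiableAt_const _)

theorem lap_const (c : ℝ) : lap (fun _ => c) x = 0 := by
  have h (a : Fin m) : pd a (fun _ : EuclideanSpace ℝ (Fin m) => c) = fun _ => 0 :=
    funext fun _ => pd_const a c
  simp [lap, h, pd_const]

theorem lap_const_mul (c : ℝ) (f : EuclideanSpace ℝ (Fin m) → ℝ) (x : EuclideanSpace ℝ (Fin m)) :
    lap (fun y => c * f y) x = c * lap f x := by
  simp only [lap, Finset.mul_sum]
  congr! 1 with a
  rw [show pd a (fun y => c * f y) = fun y => c * pd a f y from funext (pd_const_mul a c f),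
    pd_const_mul]

theorem lap_add (hf : ContDiffAt ℝ 2 f x) (hg : ContDiffAt ℝ 2 g x) :
    lap (fun y => f y + g y) x = lap f x + lap g x := by
  simp only [lap, ← Finset.sum_add_distrib]
  congr! 1 with a
  have h : pd a (fun y => f y + g y) =ᶠ[𝓝 x] fun y => pd a f y + pd a g y := by
    filter_upwards [hf.eventually_differentiableAt, hg.eventually_differentiableAt]
      with y hfy hgy using pd_add a hfy hgy
  rw [h.pd_eq a, pd_add a (hf.differentiableAt_pd a) (hg.differentiableAt_pd a)]

theorem lap_sub (hf : ContDiffAt ℝ 2 f x) (hg : ContDiffAt ℝ 2 g x) :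
    lap (fun y => f y - g y) x = lap f x - lap g x := by
  simp only [lap, ← Finset.sum_sub_distrib]
  congr! 1 with a
  have h : pd a (fun y => f y - g y) =ᶠ[𝓝 x] fun y => pd a f y - pd a g y := by
    filter_upwards [hf.eventually_differentiableAt, hg.eventually_differentiableAt]
      with y hfy hgy using pd_sub a hfy hgy
  rw [h.pd_eq a, pd_sub a (hf.differentiableAt_pd a) (hg.differentiableAt_pd a)]

theorem lap_sum {ι : Type*} [Fintype ι] {f : ι → EuclideanSpace ℝ (Fin m) → ℝ}
    (hf : ∀ i, ContDiffAt ℝ 2 (f i) x) :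
    lap (fun y => ∑ i, f i y) x = ∑ i, lap (f i) x := by
  simp only [lap]
  rw [Finset.sum_comm]
  congr! 1 with a
  have h : pd a (fun y => ∑ i, f i y) =ᶠ[𝓝 x] fun y => ∑ i, pd a (f i) y := by
    filter_upwards [eventually_all.2 fun i => (hf i).eventually_differentiableAt]
      with y hy using pd_sum a hy
  rw [h.pd_eq a, pd_sum a fun i => (hf i).differentiableAt_pd a]

theorem lap_mul (hf : ContDiffAt ℝ 2 f x) (hg : ContDiffAt ℝ 2 g x) :
    lap (fun y => f y * g y) x
      = lap f x * g x + 2 * ∑ a, pd a f x * pd a g x + f x * lap g x := by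
  simp only [lap, Finset.sum_mul, Finset.mul_sum, ← Finset.sum_add_distrib]
  congr! 1 with a
  have h : pd a (fun y => f y * g y) =ᶠ[𝓝 x] fun y => pd a f y * g y + f y * pd a g y := by
    filter_upwards [hf.eventually_differentiableAt, hg.eventually_differentiableAt]
      with y hfy hgy using pd_mul a hfy hgy
  have hf₁ := hf.differentiableAt two_ne_zero
  have hg₁ := hg.differentiableAt two_ne_zero
  rw [h.pd_eq a, pd_add a ((hf.differentiableAt_pd a).fun_mul hg₁)
      (hf₁.fun_mul (hg.differentiableAt_pd a)),
    pd_mul a (hf.differentiableAt_pd a) hg₁, pd_mul a hf₁ (hg.differentiableAt_pd a)]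
  ring

theorem lap_coord_mul (i : Fin m) (hf : ContDiffAt ℝ 2 f x) :
    lap (fun y => y i * f y) x = 2 * pd i f x + x i * lap f x := by
  have hi : ContDiffAt ℝ 2 (fun y : EuclideanSpace ℝ (Fin m) => y i) x := by fun_prop
  have hpd (a : Fin m) : pd a (fun y : EuclideanSpace ℝ (Fin m) => y i)
      = fun _ => if i = a then 1 else 0 :=
    funext fun _ => pd_coord a i
  have hlap : lap (fun y : EuclideanSpace ℝ (Fin m) => y i) x = 0 := by
    simp [lap, hpd, pd_const]
  simp [lap_mul hi hf, hlap, pd_coord]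

end Calculus

section NormPowers

variable {m : ℕ} {f : EuclideanSpace ℝ (Fin m) → ℝ} {x : EuclideanSpace ℝ (Fin m)}

theorem pd_comp {φ : ℝ → ℝ} {φ' : ℝ} (a : Fin m) (hφ : HasDerivAt φ φ' (f x))
    (hf : DifferentiableAt ℝ f x) : pd a (fun y => φ (f y)) x = φ' * pd a f x := by
  rw [pd, show (fun y => φ (f y)) = φ ∘ f from rfl, (hφ.comp_hasFDerivAt x hf.hasFDerivAt).fderiv]
  simp [pd]

theorem pd_norm_sq (a : Fin m) (x : EuclideanSpace ℝ (Fin m)) :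
    pd a (fun y => ‖y‖ ^ 2) x = 2 * x a := by
  simp [pd, fderiv_norm_sq_apply, EuclideanSpace.inner_single_right]

theorem pd_norm (a : Fin m) (hx : x ≠ 0) : pd a (fun y => ‖y‖) x = x a / ‖x‖ := by
  have hsqrt : (fun y : EuclideanSpace ℝ (Fin m) => ‖y‖) = fun y => √(‖y‖ ^ 2) :=
    funext fun y => (Real.sqrt_sq (norm_nonneg y)).symm
  rw [hsqrt, pd_comp (f := fun y => ‖y‖ ^ 2) a (Real.hasDerivAt_sqrt (by positivity))
    (differentiableAt_id.norm_sq ℝ), pd_norm_sq, Real.sqrt_sq (norm_nonneg x)]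
  field_simp

theorem pd_inv_norm_pow (a : Fin m) (hx : x ≠ 0) (n : ℕ) :
    pd a (fun y => ‖y‖⁻¹ ^ n) x = -n * x a * ‖x‖⁻¹ ^ (n + 2) := by
  have hφ : HasDerivAt (fun t : ℝ => t⁻¹ ^ n) (-n * ‖x‖⁻¹ ^ (n + 1)) ‖x‖ := by
    refine ((hasDerivAt_inv (norm_ne_zero_iff.2 hx)).fun_pow n).congr_deriv ?_
    rcases n with _ | n
    · simp
    · simp only [Nat.add_sub_cancel]
      ring
  rw [pd_comp a hφ ((contDiffAt_norm ℝ hx (n := 1)).differentiableAt one_ne_zero), pd_norm a hx]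
  ring

theorem contDiffAt_inv_norm_pow (hx : x ≠ 0) (n : ℕ) :
    ContDiffAt ℝ 2 (fun y : EuclideanSpace ℝ (Fin m) => ‖y‖⁻¹ ^ n) x := by
  have := contDiffAt_norm (n := 2) ℝ hx
  fun_prop (disch := simpa)

theorem lap_inv_norm_pow (hx : x ≠ 0) (n : ℕ) :
    lap (fun y => ‖y‖⁻¹ ^ n) x = n * (n + 2 - m) * ‖x‖⁻¹ ^ (n + 2) := by
  have hpd (a : Fin m) : pd a (pd a fun y => ‖y‖⁻¹ ^ n) x
      = -n * (‖x‖⁻¹ ^ (n + 2) - (n + 2) * x a ^ 2 * ‖x‖⁻¹ ^ (n + 4)) := by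
    have h : (pd a fun y => ‖y‖⁻¹ ^ n) =ᶠ[𝓝 x] fun y => -n * (y a * ‖y‖⁻¹ ^ (n + 2)) :=
      (eventually_ne_nhds hx).mono fun y hy => by rw [pd_inv_norm_pow a hy]; ring
    rw [h.pd_eq a, pd_const_mul, pd_mul a (by fun_prop)
      ((contDiffAt_inv_norm_pow hx _).differentiableAt two_ne_zero), pd_coord,
      pd_inv_norm_pow a hx, if_pos rfl]
    push_cast
    ring
  have hinv : ‖x‖ * ‖x‖⁻¹ = 1 := mul_inv_cancel₀ (norm_ne_zero_iff.2 hx)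
  simp only [lap, hpd, ← Finset.mul_sum, Finset.sum_sub_distrib, ← Finset.sum_mul,
    ← EuclideanSpace.real_norm_sq_eq]
  simp
  linear_combination (n * (n + 2) * ‖x‖⁻¹ ^ (n + 2) * (‖x‖ * ‖x‖⁻¹ + 1)) * hinv

end NormPowers

theorem sum_coord_mul_pd_eq_zero_of_smul {m : ℕ} {f : EuclideanSpace ℝ (Fin m) → ℝ}
    {x : EuclideanSpace ℝ (Fin m)} (hf : DifferentiableAt ℝ f x)
    (hhom : ∀ t : ℝ, 0 < t → f (t • x) = f x) : ∑ k, x k * pd k f x = 0 := by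
  have hf₁ : HasFDerivAt f (fderiv ℝ f x) ((1 : ℝ) • x) := by
    rw [one_smul]; exact hf.hasFDerivAt
  have hray : HasDerivAt (fun t : ℝ => f (t • x)) (fderiv ℝ f x x) 1 := by
    have := hf₁.comp_hasDerivAt (1 : ℝ) ((hasDerivAt_id (1 : ℝ)).smul_const x)
    simp only [id, one_smul] at this
    exact this
  have hconst : HasDerivAt (fun t : ℝ => f (t • x)) 0 1 := by
    refine (hasDerivAt_const (1 : ℝ) (f x)).congr_of_eventuallyEq ?_
    filter_upwards [Ioi_mem_nhds one_pos] with t ht using hhom t ht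
  have hbasis : ∑ k, x k • EuclideanSpace.single k (1 : ℝ) = x := by
    simpa using (EuclideanSpace.basisFun (Fin m) ℝ).sum_repr x
  calc ∑ k, x k * pd k f x = fderiv ℝ f x (∑ k, x k • EuclideanSpace.single k (1 : ℝ)) := by
        simp [pd, map_sum]
    _ = 0 := by rw [hbasis, hray.unique hconst]

/-- The radial extension of an eigenmap `𝕊^{m-1} → 𝕊^{|ι|-1}` with eigenvalue `μ`. -/
structure IsHomogeneousEigenmap {m : ℕ} {ι : Type*} [Fintype ι]
    (v : ι → EuclideanSpace ℝ (Fin m) → ℝ) (μ : ℝ) : Prop where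
  contDiffOn : ∀ a, ContDiffOn ℝ 2 (v a) {0}ᶜ
  sum_sq : ∀ y, y ≠ 0 → ∑ a, v a y ^ 2 = 1
  apply_smul : ∀ a y, ∀ t : ℝ, 0 < t → v a (t • y) = v a y
  lap_eq : ∀ a y, y ≠ 0 → lap (v a) y = -μ * ‖y‖⁻¹ ^ 2 * v a y

namespace IsHomogeneousEigenmap

variable {m : ℕ} {ι : Type*} [Fintype ι] {v : ι → EuclideanSpace ℝ (Fin m) → ℝ} {μ : ℝ}
  {x : EuclideanSpace ℝ (Fin m)} (hv : IsHomogeneousEigenmap v μ) (hx : x ≠ 0)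
include hv hx

theorem contDiffAt (a : ι) : ContDiffAt ℝ 2 (v a) x :=
  (hv.contDiffOn a).contDiffAt (isOpen_compl_singleton.mem_nhds hx)

theorem sum_coord_mul_pd (a : ι) : ∑ k, x k * pd k (v a) x = 0 :=
  sum_coord_mul_pd_eq_zero_of_smul ((hv.contDiffAt hx a).differentiableAt two_ne_zero)
    fun t ht => hv.apply_smul a x t ht

theorem sum_pd_inv_norm_pow_mul_pd (n : ℕ) (a : ι) :
    ∑ k, pd k (fun y => ‖y‖⁻¹ ^ n) x * pd k (v a) x = 0 := by
  calc ∑ k, pd k (fun y => ‖y‖⁻¹ ^ n) x * pd k (v a) x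
      = ∑ k, -n * ‖x‖⁻¹ ^ (n + 2) * (x k * pd k (v a) x) := by
        refine Finset.sum_congr rfl fun k _ => ?_
        rw [pd_inv_norm_pow _ hx]; ring
    _ = 0 := by rw [← Finset.mul_sum, hv.sum_coord_mul_pd hx a, mul_zero]

theorem sum_mul_self_eventuallyEq : (fun y => ∑ b, v b y * v b y) =ᶠ[𝓝 x] fun _ => 1 :=
  (eventually_ne_nhds hx).mono fun y hy => by simpa [sq] using hv.sum_sq y hy

theorem sum_mul_pd (k : Fin m) : ∑ b, v b x * pd k (v b) x = 0 := by
  have hd (b : ι) := (hv.contDiffAt hx b).differentiableAt two_ne_zero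
  have := (hv.sum_mul_self_eventuallyEq hx).pd_eq k
  rw [pd_sum k fun b => (hd b).fun_mul (hd b), pd_const] at this
  simp only [pd_mul k (hd _) (hd _), mul_comm (pd k _ x), ← two_mul, ← Finset.mul_sum] at this
  simpa using this

theorem gradSq_eq : gradSq v x = μ * ‖x‖⁻¹ ^ 2 := by
  have := (hv.sum_mul_self_eventuallyEq hx).lap_eq
  rw [lap_sum fun b => (hv.contDiffAt hx b).mul (hv.contDiffAt hx b), lap_const] at this
  simp only [lap_mul (hv.contDiffAt hx _) (hv.contDiffAt hx _), hv.lap_eq _ _ hx] at this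
  have hexpand : gradSq v x - μ * ‖x‖⁻¹ ^ 2 * ∑ b, v b x ^ 2 = ∑ b,
      (-μ * ‖x‖⁻¹ ^ 2 * v b x * v b x + 2 * ∑ a, pd a (v b) x * pd a (v b) x
        + v b x * (-μ * ‖x‖⁻¹ ^ 2 * v b x)) / 2 := by
    rw [gradSq, Finset.sum_comm, Finset.mul_sum, ← Finset.sum_sub_distrib]
    refine Finset.sum_congr rfl fun b _ => ?_
    simp only [sq]
    ring
  rw [← Finset.sum_div, this, hv.sum_sq x hx] at hexpand
  linear_combination hexpand

theorem lap_eventuallyEq (a : ι) :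
    lap (v a) =ᶠ[𝓝 x] fun y => -μ * (‖y‖⁻¹ ^ 2 * v a y) :=
  (eventually_ne_nhds hx).mono fun y hy => by rw [hv.lap_eq a y hy]; ring

theorem gradSq_eventuallyEq : gradSq v =ᶠ[𝓝 x] fun y => μ * ‖y‖⁻¹ ^ 2 :=
  (eventually_ne_nhds hx).mono fun _ hy => hv.gradSq_eq hy

theorem sum_lap_sq : ∑ b, lap (v b) x ^ 2 = μ ^ 2 * ‖x‖⁻¹ ^ 4 := by
  simp only [hv.lap_eq _ _ hx, mul_pow, ← Finset.mul_sum, hv.sum_sq x hx]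
  ring

theorem lap_gradSq : lap (gradSq v) x = 2 * μ * (4 - m) * ‖x‖⁻¹ ^ 4 := by
  rw [(hv.gradSq_eventuallyEq hx).lap_eq, lap_const_mul, lap_inv_norm_pow hx]
  push_cast
  ring

theorem lap_lap (a : ι) : lap (lap (v a)) x = μ * (μ + 2 * m - 8) * ‖x‖⁻¹ ^ 4 * v a x := by
  rw [(hv.lap_eventuallyEq hx a).lap_eq, lap_const_mul,
    lap_mul (contDiffAt_inv_norm_pow hx 2) (hv.contDiffAt hx a), lap_inv_norm_pow hx,
    hv.sum_pd_inv_norm_pow_mul_pd hx, hv.lap_eq a x hx]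
  push_cast
  ring

theorem sum_pd_gradSq_mul_pd (a : ι) :
    ∑ k, pd k (fun y => gradSq v y * pd k (v a) y) x = -μ ^ 2 * ‖x‖⁻¹ ^ 4 * v a x := by
  have hpd (k : Fin m) : pd k (fun y => gradSq v y * pd k (v a) y) x
      = μ * (pd k (fun y => ‖y‖⁻¹ ^ 2) x * pd k (v a) x + ‖x‖⁻¹ ^ 2 * pd k (pd k (v a)) x) := by
    have h : (fun y => gradSq v y * pd k (v a) y) =ᶠ[𝓝 x]
        fun y => μ * (‖y‖⁻¹ ^ 2 * pd k (v a) y) := by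
      filter_upwards [hv.gradSq_eventuallyEq hx] with y hy
      rw [hy, mul_assoc]
    rw [h.pd_eq k, pd_const_mul, pd_mul k
      ((contDiffAt_inv_norm_pow hx 2).differentiableAt two_ne_zero)
      ((hv.contDiffAt hx a).differentiableAt_pd k)]
  simp only [hpd, ← Finset.mul_sum, Finset.sum_add_distrib, hv.sum_pd_inv_norm_pow_mul_pd hx]
  rw [← lap, hv.lap_eq a x hx]
  ring

theorem sum_pd_mul_pd_lap :
    ∑ k, ∑ b, pd k (v b) x * pd k (lap (v b)) x = -μ ^ 2 * ‖x‖⁻¹ ^ 4 := by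
  have hpd (k : Fin m) (b : ι) : pd k (lap (v b)) x
      = -μ * (pd k (fun y => ‖y‖⁻¹ ^ 2) x * v b x + ‖x‖⁻¹ ^ 2 * pd k (v b) x) := by
    rw [(hv.lap_eventuallyEq hx b).pd_eq k, pd_const_mul, pd_mul k
      ((contDiffAt_inv_norm_pow hx 2).differentiableAt two_ne_zero)
      ((hv.contDiffAt hx b).differentiableAt two_ne_zero)]
  calc ∑ k, ∑ b, pd k (v b) x * pd k (lap (v b)) x
      = ∑ k, (-μ * pd k (fun y => ‖y‖⁻¹ ^ 2) x) * ∑ b, v b x * pd k (v b) x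
          + -μ * ‖x‖⁻¹ ^ 2 * gradSq v x := by
        rw [gradSq, Finset.mul_sum, ← Finset.sum_add_distrib]
        refine Finset.sum_congr rfl fun k _ => ?_
        rw [Finset.mul_sum, Finset.mul_sum, ← Finset.sum_add_distrib]
        refine Finset.sum_congr rfl fun b _ => ?_
        rw [hpd]
        ring
    _ = -μ ^ 2 * ‖x‖⁻¹ ^ 4 := by
        simp only [hv.sum_mul_pd hx, mul_zero, Finset.sum_const_zero, hv.gradSq_eq hx]
        ring

end IsHomogeneousEigenmap

/-- The map `ṽ_β = (sin β · v, cos β)` of the paper, for an arbitrary `v`. -/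
def tilt {m : ℕ} {ι : Type*} (β : ℝ) (v : ι → EuclideanSpace ℝ (Fin m) → ℝ) :
    ι ⊕ Unit → EuclideanSpace ℝ (Fin m) → ℝ :=
  Sum.elim (fun a y => Real.sin β * v a y) fun _ _ => Real.cos β

section Tilt

variable {m : ℕ} {ι : Type*} (β : ℝ) (v : ι → EuclideanSpace ℝ (Fin m) → ℝ)

@[simp]
theorem tilt_inl_apply (a : ι) (y : EuclideanSpace ℝ (Fin m)) :
    tilt β v (.inl a) y = Real.sin β * v a y := rfl

@[simp]
theorem tilt_inr_apply (u : Unit) (y : EuclideanSpace ℝ (Fin m)) :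
    tilt β v (.inr u) y = Real.cos β := rfl

theorem pd_tilt_inl (k : Fin m) (a : ι) :
    pd k (tilt β v (.inl a)) = fun y => Real.sin β * pd k (v a) y :=
  funext fun y => pd_const_mul k _ _ y

theorem pd_tilt_inr (k : Fin m) (u : Unit) : pd k (tilt β v (.inr u)) = fun _ => 0 :=
  funext fun _ => pd_const k _

theorem lap_tilt_inl (a : ι) : lap (tilt β v (.inl a)) = fun y => Real.sin β * lap (v a) y :=
  funext fun y => lap_const_mul _ _ y

theorem lap_tilt_inr (u : Unit) : lap (tilt β v (.inr u)) = fun _ => 0 :=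
  funext fun _ => lap_const _

theorem gradSq_tilt [Fintype ι] : gradSq (tilt β v) = fun y => Real.sin β ^ 2 * gradSq v y := by
  ext y
  simp [gradSq, Fintype.sum_sum_type, pd_tilt_inl, pd_tilt_inr, mul_pow, Finset.mul_sum]

end Tilt

namespace IsHomogeneousEigenmap

variable {m : ℕ} {ι : Type*} [Fintype ι] {v : ι → EuclideanSpace ℝ (Fin m) → ℝ} {μ : ℝ}
  {x : EuclideanSpace ℝ (Fin m)} (hv : IsHomogeneousEigenmap v μ) (hx : x ≠ 0) (β : ℝ)
include hv hx

theorem tilt_coefficient :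
    ∑ b, lap (tilt β v b) x ^ 2 + lap (gradSq (tilt β v)) x
        + 2 * ∑ k, ∑ b, pd k (tilt β v b) x * pd k (lap (tilt β v b)) x
        + 2 * gradSq (tilt β v) x ^ 2
      = Real.sin β ^ 2 * μ * (2 * Real.sin β ^ 2 * μ - μ + 8 - 2 * m) * ‖x‖⁻¹ ^ 4 := by
  have hmixed : ∑ k, ∑ b, Real.sin β * pd k (v b) x * (Real.sin β * pd k (lap (v b)) x)
      = Real.sin β ^ 2 * (-μ ^ 2 * ‖x‖⁻¹ ^ 4) := by
    rw [← hv.sum_pd_mul_pd_lap hx, Finset.mul_sum]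
    congr! 1 with k
    rw [Finset.mul_sum]
    congr! 1 with b
    ring
  simp only [Fintype.sum_sum_type, lap_tilt_inl, lap_tilt_inr, pd_tilt_inl, pd_tilt_inr,
    gradSq_tilt, lap_const_mul, pd_const_mul, pd_const, mul_zero, zero_pow two_ne_zero,
    Finset.sum_const_zero, add_zero, mul_pow, ← Finset.mul_sum, hmixed,
    hv.sum_lap_sq hx, hv.lap_gradSq hx, hv.gradSq_eq hx]
  ring

theorem lap_lap_add_two_div_tilt_inl (a : ι) :
    lap (lap (tilt β v (.inl a))) x
        + 2 * ∑ k, pd k (fun y => gradSq (tilt β v) y * pd k (tilt β v (.inl a)) y) x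
      = Real.sin β * μ * (μ + 2 * m - 8 - 2 * Real.sin β ^ 2 * μ) * ‖x‖⁻¹ ^ 4 * v a x := by
  have hdiv (k : Fin m) : (fun y => gradSq (tilt β v) y * pd k (tilt β v (.inl a)) y)
      = fun y => Real.sin β ^ 3 * (gradSq v y * pd k (v a) y) := by
    ext y; simp only [gradSq_tilt, pd_tilt_inl]; ring
  simp only [lap_tilt_inl, hdiv, lap_const_mul, pd_const_mul, ← Finset.mul_sum,
    hv.lap_lap hx, hv.sum_pd_gradSq_mul_pd hx]
  ring

theorem isBiharmonicAt_tilt_iff :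
    IsBiharmonicAt (tilt β v) x ↔
      Real.sin β * Real.cos β * μ * (2 * Real.sin β ^ 2 * μ - μ + 8 - 2 * m) = 0 := by
  have hρ : ‖x‖⁻¹ ^ 4 ≠ 0 := pow_ne_zero _ (inv_ne_zero (norm_ne_zero_iff.2 hx))
  simp only [IsBiharmonicAt, Sum.forall, hv.tilt_coefficient hx β,
    hv.lap_lap_add_two_div_tilt_inl hx β, lap_tilt_inr, lap_const, pd_tilt_inr, mul_zero,
    pd_const, Finset.sum_const_zero, tilt_inl_apply, tilt_inr_apply, zero_add]
  constructor
  · rintro ⟨-, hinr⟩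
    have h : Real.sin β * (Real.sin β * Real.cos β * μ * (2 * Real.sin β ^ 2 * μ - μ + 8 - 2 * m))
        * ‖x‖⁻¹ ^ 4 = 0 := by
      linear_combination hinr ()
    rcases mul_eq_zero.1 ((mul_eq_zero.1 h).resolve_right hρ) with hs | h
    · simp [hs]
    · exact h
  · intro h
    refine ⟨fun a => ?_, fun _ => ?_⟩
    · linear_combination (-(Real.cos β * ‖x‖⁻¹ ^ 4 * v a x)) * h
        + (Real.sin β * μ * (2 * Real.sin β ^ 2 * μ - μ + 8 - 2 * m) * ‖x‖⁻¹ ^ 4 * v a x)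
          * Real.sin_sq_add_cos_sq β
    · linear_combination (Real.sin β * ‖x‖⁻¹ ^ 4) * h

end IsHomogeneousEigenmap

def symDelta {m : ℕ} (x : EuclideanSpace ℝ (Fin m)) (i j k : Fin m) : ℝ :=
  (if i = j then 1 else 0) * x k + (if j = k then 1 else 0) * x i + (if i = k then 1 else 0) * x j

section MisawaNakauchi

variable {m : ℕ} {x : EuclideanSpace ℝ (Fin m)}

theorem sum_symDelta_sq (x : EuclideanSpace ℝ (Fin m)) :
    ∑ i, ∑ j, ∑ k, symDelta x i j k ^ 2 = 3 * (m + 2) * ‖x‖ ^ 2 := by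
  simp only [symDelta, add_sq, add_mul, mul_add, Finset.sum_add_distrib, ite_mul, mul_ite, one_mul,
    zero_mul, mul_zero, ite_pow, Finset.sum_ite_irrel, Finset.sum_ite_eq, Finset.sum_ite_eq',
    Finset.mem_univ, if_true, Finset.sum_const_zero, ne_eq, OfNat.ofNat_ne_zero,
    not_false_eq_true, zero_pow]
  ring_nf
  simp only [Finset.sum_const, Finset.card_univ, Fintype.card_fin, nsmul_eq_mul, ← Finset.mul_sum,
    ← Finset.sum_mul, ← EuclideanSpace.real_norm_sq_eq]
  ring

theorem sum_symDelta_mul_cube (x : EuclideanSpace ℝ (Fin m)) :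
    ∑ i, ∑ j, ∑ k, symDelta x i j k * (x i * (x j * x k)) = 3 * ‖x‖ ^ 4 := by
  simp only [symDelta, add_mul, Finset.sum_add_distrib, ite_mul, one_mul, zero_mul,
    Finset.sum_ite_irrel, Finset.sum_ite_eq, Finset.mem_univ, if_true, Finset.sum_const_zero]
  ring_nf
  simp only [← Finset.mul_sum, ← Finset.sum_mul, ← EuclideanSpace.real_norm_sq_eq]
  ring

theorem sum_cube_sq (x : EuclideanSpace ℝ (Fin m)) :
    ∑ i, ∑ j, ∑ k, (x i * (x j * x k)) ^ 2 = ‖x‖ ^ 6 := by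
  simp only [mul_pow, ← Finset.mul_sum, ← Finset.sum_mul, ← EuclideanSpace.real_norm_sq_eq]
  ring

theorem vMN_eq (i j k : Fin m) : vMN m i j k = fun y =>
    1 / √((m - 1) * (m + 2)) * ((if i = j then 1 else 0) * (y k * ‖y‖⁻¹ ^ 1)
      + (if j = k then 1 else 0) * (y i * ‖y‖⁻¹ ^ 1) + (if i = k then 1 else 0) * (y j * ‖y‖⁻¹ ^ 1)
      - (m + 2) * (y i * (y j * (y k * ‖y‖⁻¹ ^ 3)))) := by
  ext y
  simp only [vMN, div_eq_mul_inv, inv_pow]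
  ring

theorem sum_vMN_sq (hm : 2 ≤ m) (hx : x ≠ 0) :
    ∑ p : Fin m × Fin m × Fin m, vMN m p.1 p.2.1 p.2.2 x ^ 2 = 1 := by
  have hm' : (2 : ℝ) ≤ m := by exact_mod_cast hm
  set c : ℝ := 1 / √((m - 1) * (m + 2)) with hc_def
  have hc : c ^ 2 = 1 / ((m - 1) * (m + 2)) := by
    rw [hc_def, div_pow, one_pow, Real.sq_sqrt (by nlinarith)]
  have hpt (i j k : Fin m) : vMN m i j k x ^ 2
      = c ^ 2 * ‖x‖⁻¹ ^ 2 * symDelta x i j k ^ 2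
        - c ^ 2 * (2 * (m + 2)) * ‖x‖⁻¹ ^ 4 * (symDelta x i j k * (x i * (x j * x k)))
        + c ^ 2 * (m + 2) ^ 2 * ‖x‖⁻¹ ^ 6 * (x i * (x j * x k)) ^ 2 := by
    simp only [vMN, symDelta, hc_def, div_eq_mul_inv]
    ring
  simp only [Fintype.sum_prod_type, hpt, Finset.sum_add_distrib, Finset.sum_sub_distrib,
    ← Finset.mul_sum, sum_symDelta_sq, sum_symDelta_mul_cube, sum_cube_sq, hc]
  have : (m : ℝ) - 1 ≠ 0 := by linarith
  have : ‖x‖ ≠ 0 := norm_ne_zero_iff.2 hx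
  field_simp
  ring

theorem lap_coord_mul_inv_norm_pow (hx : x ≠ 0) (k : Fin m) (n : ℕ) :
    lap (fun y => y k * ‖y‖⁻¹ ^ n) x = n * (n - m) * x k * ‖x‖⁻¹ ^ (n + 2) := by
  rw [lap_coord_mul k (contDiffAt_inv_norm_pow hx n), pd_inv_norm_pow k hx, lap_inv_norm_pow hx]
  ring

theorem lap_cube_mul_inv_norm_pow_three (hx : x ≠ 0) (i j k : Fin m) :
    lap (fun y => y i * (y j * (y k * ‖y‖⁻¹ ^ 3))) x
      = 2 * symDelta x i j k * ‖x‖⁻¹ ^ 3 - 3 * (m + 1) * (x i * (x j * x k)) * ‖x‖⁻¹ ^ 5 := by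
  have hρ := contDiffAt_inv_norm_pow hx 3
  have hρ₁ := hρ.differentiableAt two_ne_zero
  rw [lap_coord_mul i (by fun_prop), lap_coord_mul j (by fun_prop),
    lap_coord_mul_inv_norm_pow hx, pd_mul i (by fun_prop) (by fun_prop),
    pd_mul i (by fun_prop) hρ₁, pd_mul j (by fun_prop) hρ₁, pd_coord, pd_coord, pd_coord,
    pd_inv_norm_pow i hx, pd_inv_norm_pow j hx]
  simp only [symDelta, @eq_comm _ j i, @eq_comm _ k i, @eq_comm _ k j]
  push_cast
  ring

theorem contDiffAt_vMN (hx : x ≠ 0) (i j k : Fin m) : ContDiffAt ℝ 2 (vMN m i j k) x := by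
  have := contDiffAt_inv_norm_pow hx 1
  have := contDiffAt_inv_norm_pow hx 3
  rw [vMN_eq]
  fun_prop

theorem lap_vMN (hx : x ≠ 0) (i j k : Fin m) :
    lap (vMN m i j k) x = -(3 * (m + 1)) * ‖x‖⁻¹ ^ 2 * vMN m i j k x := by
  have := contDiffAt_inv_norm_pow hx 1
  have := contDiffAt_inv_norm_pow hx 3
  rw [vMN_eq, lap_const_mul, lap_sub (by fun_prop) (by fun_prop),
    lap_add (by fun_prop) (by fun_prop), lap_add (by fun_prop) (by fun_prop), lap_const_mul,
    lap_const_mul, lap_const_mul, lap_const_mul, lap_coord_mul_inv_norm_pow hx,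
    lap_coord_mul_inv_norm_pow hx, lap_coord_mul_inv_norm_pow hx,
    lap_cube_mul_inv_norm_pow_three hx]
  simp only [symDelta]
  push_cast
  ring

theorem vMN_smul (i j k : Fin m) (y : EuclideanSpace ℝ (Fin m)) {t : ℝ} (ht : 0 < t) :
    vMN m i j k (t • y) = vMN m i j k y := by
  rcases eq_or_ne y 0 with rfl | hy
  · rw [smul_zero]
  have : ‖y‖ ≠ 0 := norm_ne_zero_iff.2 hy
  simp only [vMN, PiLp.smul_apply, smul_eq_mul, norm_smul, Real.norm_of_nonneg ht.le]
  field_simp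

theorem isHomogeneousEigenmap_vMN (hm : 2 ≤ m) :
    IsHomogeneousEigenmap (fun p : Fin m × Fin m × Fin m => vMN m p.1 p.2.1 p.2.2)
      (3 * (m + 1)) where
  contDiffOn _ _ hy := (contDiffAt_vMN hy _ _ _).contDiffWithinAt
  sum_sq _ hy := sum_vMN_sq hm hy
  apply_smul _ y _ ht := vMN_smul _ _ _ y ht
  lap_eq _ _ hy := lap_vMN hy _ _ _

end MisawaNakauchi

theorem vTilde_eq_tilt (m : ℕ) (β : ℝ) :
    vTilde m β = tilt β fun p : Fin m × Fin m × Fin m => vMN m p.1 p.2.1 p.2.2 := by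
  ext (p | u) <;> rfl

theorem stmt16 (m : ℕ) (hm : 2 ≤ m) (β : ℝ) (hβ : β ∈ Set.Ioo 0 (π / 2)) :
    (∀ x : EuclideanSpace ℝ (Fin m), x ≠ 0 → IsBiharmonicAt (vTilde m β) x)
      ↔ Real.sin β ^ 2 = (5 / 6) * (((m : ℝ) - 1) / ((m : ℝ) + 1)) := by
  obtain ⟨hβ₀, hβ₁⟩ := hβ
  have hsin : 0 < Real.sin β := Real.sin_pos_of_pos_of_lt_pi hβ₀ (by linarith [Real.pi_pos])
  have hcos : 0 < Real.cos β := Real.cos_pos_of_mem_Ioo ⟨by linarith, hβ₁⟩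
  have hv := isHomogeneousEigenmap_vMN hm
  have hx₀ : EuclideanSpace.single (⟨0, by omega⟩ : Fin m) (1 : ℝ) ≠ 0 := by simp
  rw [vTilde_eq_tilt]
  calc (∀ x : EuclideanSpace ℝ (Fin m), x ≠ 0 → IsBiharmonicAt (tilt β _) x)
      ↔ Real.sin β * Real.cos β * (3 * (m + 1))
          * (2 * Real.sin β ^ 2 * (3 * (m + 1)) - 3 * (m + 1) + 8 - 2 * m) = 0 :=
        ⟨fun h => (hv.isBiharmonicAt_tilt_iff hx₀ β).1 (h _ hx₀),
          fun h x hx => (hv.isBiharmonicAt_tilt_iff hx β).2 h⟩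
    _ ↔ _ := by
        rw [mul_eq_zero, or_iff_right (by positivity)]
        constructor <;> intro h
        · field_simp
          linarith
        · rw [h]
          field_simp
          ring
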